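/- Under the multi-logger setting with δ ∈ [0, L] and d_2(h||h_avg) ≤ d_∞(h||h_avg) = M_avg, for any η > 0, with probability at least 1 − η: R(h) ≤ R̂_bal(h) + (2 L M_avg log(1/η))/(3n) + L √((2 d_2(h||h_avg; P) log(1/η))/n). -/

import Mathlib

/-!
Each logged sample `Z` contributes `Y = h/h_avg · δ(Z) ∈ [0, L M_avg]`. Pooling the loggers, the
laws `h_j P` of the samples average to `h_avg P`, so the `n` samples satisfy `∑ E[Y] = n R(h)` and
`∑ E[Y²] ≤ n L² d₂(h‖h_avg; P)`. Bernstein's inequality for the independent centred variables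
`E[Y] - Y ≤ L M_avg` then bounds the deviation of `n R̂_bal(h)` below `n R(h)` by
`√(2 V s) + 2 b s / 3` with `V = n L² d₂`, `b = L M_avg` and `s = log (1/η)`, except on an event
of probability at most `e^{-s} = η`.
-/

open MeasureTheory ProbabilityTheory Real
open scoped ENNReal Nat

namespace Real

lemma exp_le_one_add_add_sq_div_two_of_nonpos {y : ℝ} (hy : y ≤ 0) :
    exp y ≤ 1 + y + y ^ 2 / 2 := by
  have hseries := sum_le_exp_of_nonneg (neg_nonneg.2 hy) 4
  simp only [Finset.sum_range_succ, Finset.sum_range_zero, Nat.factorial] at hseries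
  norm_num at hseries
  have hQ : 0 ≤ 1 + y + y ^ 2 / 2 := by nlinarith [sq_nonneg (y + 1)]
  -- `(1 + y + y²/2) (1 - y + y²/2 - y³/6) = 1 - y³ (2 - y + y²) / 12 ≥ 1` for `y ≤ 0`
  have hprod : 1 ≤ (1 + y + y ^ 2 / 2) * exp (-y) := by
    calc (1 : ℝ) ≤ (1 + y + y ^ 2 / 2) * (1 - y + y ^ 2 / 2 - y ^ 3 / 6) := by
          nlinarith [mul_nonneg (pow_nonneg (neg_nonneg.2 hy) 3)
            (add_nonneg (sq_nonneg y) (by linarith : (0 : ℝ) ≤ 2 - y))]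
      _ ≤ (1 + y + y ^ 2 / 2) * exp (-y) := by gcongr; linarith
  calc exp y ≤ exp y * ((1 + y + y ^ 2 / 2) * exp (-y)) :=
        le_mul_of_one_le_right (exp_pos y).le hprod
    _ = 1 + y + y ^ 2 / 2 := by rw [mul_left_comm, ← exp_add, add_neg_cancel, exp_zero, mul_one]

lemma exp_le_one_add_add_sq_div_of_nonneg {y : ℝ} (hy : 0 ≤ y) (hy3 : y < 3) :
    exp y ≤ 1 + y + y ^ 2 / (2 * (1 - y / 3)) := by
  have hexp : HasSum (fun n : ℕ => y ^ n / n !) (exp y) := by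
    rw [exp_eq_exp_ℝ]
    exact NormedSpace.expSeries_div_hasSum_exp y
  -- `(k + 2)! ≥ 2 * 3 ^ k` dominates the tail by a geometric series of ratio `y / 3`
  have hgeom : HasSum (fun k : ℕ => y ^ 2 / 2 * (y / 3) ^ k) (y ^ 2 / (2 * (1 - y / 3))) := by
    have h := (hasSum_geometric_of_lt_one (r := y / 3) (by positivity) (by linarith)).mul_left
      (y ^ 2 / 2)
    rwa [← div_eq_mul_inv, div_div] at h
  have htail : ∀ k : ℕ, y ^ (k + 2) / (k + 2)! ≤ y ^ 2 / 2 * (y / 3) ^ k := by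
    intro k
    have hfact : (2 * 3 ^ k : ℝ) ≤ (k + 2)! := by
      have := @Nat.factorial_mul_pow_le_factorial 2 k
      rw [add_comm 2 k] at this
      exact_mod_cast this
    rw [div_pow, pow_add, show y ^ 2 / 2 * (y ^ k / 3 ^ k) = y ^ k * y ^ 2 / (2 * 3 ^ k) by ring]
    gcongr
  have := hasSum_le htail ((hasSum_nat_add_iff' 2).2 hexp) hgeom
  norm_num [Finset.sum_range_succ] at this
  linarith

lemma exp_le_one_add_add_sq_div {y u : ℝ} (hyu : y ≤ u) (hu : 0 ≤ u) (hu3 : u < 3) :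
    exp y ≤ 1 + y + y ^ 2 / (2 * (1 - u / 3)) := by
  rcases le_or_gt y 0 with hy | hy
  · calc exp y ≤ 1 + y + y ^ 2 / 2 := exp_le_one_add_add_sq_div_two_of_nonpos hy
      _ ≤ 1 + y + y ^ 2 / (2 * (1 - u / 3)) := by gcongr <;> linarith
  · calc exp y ≤ 1 + y + y ^ 2 / (2 * (1 - y / 3)) :=
          exp_le_one_add_add_sq_div_of_nonneg hy.le (by linarith)
      _ ≤ 1 + y + y ^ 2 / (2 * (1 - u / 3)) := by gcongr; linarith

end Real

namespace MeasureTheory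

variable {Ω : Type*} [MeasurableSpace Ω] {μ : Measure Ω}

lemma measure_gt_le_of_forall_measure_ge_le {f : Ω → ℝ} {c₀ : ℝ} {a : ℝ≥0∞}
    (h : ∀ c, c₀ < c → μ {ω | c ≤ f ω} ≤ a) : μ {ω | c₀ < f ω} ≤ a := by
  have hunion : {ω | c₀ < f ω} = ⋃ n : ℕ, {ω | c₀ + 1 / ((n : ℝ) + 1) ≤ f ω} := by
    ext ω
    simp only [Set.mem_ofPred_eq, Set.mem_iUnion]
    constructor
    · intro hω
      obtain ⟨n, hn⟩ := exists_nat_one_div_lt (sub_pos.2 hω)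
      exact ⟨n, by linarith⟩
    · rintro ⟨n, hn⟩
      linarith [Nat.one_div_pos_of_nat (α := ℝ) (n := n)]
  have hmono : Monotone fun n : ℕ => {ω | c₀ + 1 / ((n : ℝ) + 1) ≤ f ω} := by
    intro m n hmn ω hω
    simp only [Set.mem_ofPred_eq] at hω ⊢
    refine le_trans ?_ hω
    gcongr
  rw [hunion, hmono.measure_iUnion]
  exact iSup_le fun n => h _ (by linarith [Nat.one_div_pos_of_nat (α := ℝ) (n := n)])

lemma one_sub_measure_le_measure_compl [IsProbabilityMeasure μ] (s : Set Ω) :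
    1 - μ s ≤ μ sᶜ := by
  rw [tsub_le_iff_left, ← measure_univ (μ := μ)]
  exact measure_univ_le_add_compl s

lemma withDensity_sum_fintype {ι α : Type*} [Fintype ι] [MeasurableSpace α] (ν : Measure α)
    {f : ι → α → ℝ≥0∞} (hf : ∀ i, Measurable (f i)) :
    ν.withDensity (∑ i, f i) = ∑ i, ν.withDensity (f i) := by
  rw [← tsum_fintype (L := SummationFilter.unconditional ι), withDensity_tsum hf,
    Measure.sum_fintype]

lemma sum_integral_comp_eq_integral_sum_mul [IsProbabilityMeasure μ] {ι α : Type*} [Fintype ι]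
    [MeasurableSpace α] {ν : Measure α} {Z : ι → Ω → α} {g : ι → α → ℝ}
    (hZ : ∀ i, Measurable (Z i)) (hg : ∀ i, Measurable (g i)) (hg0 : ∀ i x, 0 ≤ g i x)
    (hlaw : ∀ i, μ.map (Z i) = ν.withDensity fun x => ENNReal.ofReal (g i x))
    {F : α → ℝ} (hF : Measurable F) {a b : ℝ} (hFab : ∀ x, F x ∈ Set.Icc a b) :
    ∑ i, ∫ ω, F (Z i ω) ∂μ = ∫ x, (∑ i, g i x) * F x ∂ν := by
  have hint : ∀ i ∈ Finset.univ, Integrable F (μ.map (Z i)) := fun i _ =>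
    have := Measure.isProbabilityMeasure_map (μ := μ) (hZ i).aemeasurable
    .of_mem_Icc a b hF.aemeasurable (ae_of_all _ hFab)
  have hdens : (∑ i, fun x => ENNReal.ofReal (g i x)) = fun x => ENNReal.ofReal (∑ i, g i x) :=
    funext fun x => by rw [Finset.sum_apply, ENNReal.ofReal_sum_of_nonneg fun i _ => hg0 i x]
  calc ∑ i, ∫ ω, F (Z i ω) ∂μ = ∑ i, ∫ x, F x ∂(μ.map (Z i)) :=
        Finset.sum_congr rfl fun i _ =>
          (integral_map (hZ i).aemeasurable hF.aestronglyMeasurable).symm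
    _ = ∫ x, F x ∂(ν.withDensity (∑ i, fun x => ENNReal.ofReal (g i x))) := by
        rw [← integral_finsetSum_measure hint,
          withDensity_sum_fintype ν fun i => (hg i).ennreal_ofReal]
        simp only [hlaw]
    _ = ∫ x, (∑ i, g i x) * F x ∂ν := by
        rw [hdens, integral_withDensity_eq_integral_toReal_smul
          (Finset.measurable_sum _ fun i _ => hg i).ennreal_ofReal
          (ae_of_all _ fun x => ENNReal.ofReal_lt_top)]
        simp only [ENNReal.toReal_ofReal (Finset.sum_nonneg fun i _ => hg0 i _), smul_eq_mul]

end MeasureTheory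

namespace ProbabilityTheory

variable {Ω : Type*} [MeasurableSpace Ω] {μ : Measure Ω}

lemma mgf_le_exp_bernstein [IsProbabilityMeasure μ] {X : Ω → ℝ} {b t : ℝ} (hX : MemLp X 2 μ)
    (hXb : ∀ᵐ ω ∂μ, X ω ≤ b) (hmean : μ[X] = 0) (hb : 0 ≤ b) (ht : 0 ≤ t) (htb : t * b < 3) :
    mgf X μ t ≤ exp (t ^ 2 / (2 * (1 - t * b / 3)) * ∫ ω, X ω ^ 2 ∂μ) := by
  set c := t ^ 2 / (2 * (1 - t * b / 3))
  have hquad : ∀ᵐ ω ∂μ, exp (t * X ω) ≤ 1 + t * X ω + c * X ω ^ 2 := by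
    filter_upwards [hXb] with ω hω
    have := exp_le_one_add_add_sq_div (mul_le_mul_of_nonneg_left hω ht) (mul_nonneg ht hb) htb
    rwa [mul_pow, mul_div_right_comm] at this
  have hlin : Integrable (fun ω => 1 + t * X ω) μ :=
    (integrable_const 1).add ((hX.integrable one_le_two).const_mul t)
  have hsq : Integrable (fun ω => c * X ω ^ 2) μ := hX.integrable_sq.const_mul c
  calc mgf X μ t ≤ ∫ ω, (1 + t * X ω + c * X ω ^ 2) ∂μ :=
        integral_mono_of_nonneg (ae_of_all _ fun ω => (exp_pos _).le) (hlin.add hsq) hquad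
    _ = 1 + c * ∫ ω, X ω ^ 2 ∂μ := by
        rw [integral_add hlin hsq, integral_add (integrable_const 1)
          ((hX.integrable one_le_two).const_mul t), integral_const_mul, integral_const_mul, hmean]
        simp
    _ ≤ exp (c * ∫ ω, X ω ^ 2 ∂μ) := by linarith [add_one_le_exp (c * ∫ ω, X ω ^ 2 ∂μ)]

theorem measureReal_sum_ge_le_bernstein {ι : Type*} [Fintype ι] {X : ι → Ω → ℝ} {b V t : ℝ}
    (hindep : iIndepFun X μ) (hX : ∀ i, MemLp (X i) 2 μ) (hXb : ∀ i, ∀ᵐ ω ∂μ, X i ω ≤ b)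
    (hmean : ∀ i, μ[X i] = 0) (hvar : ∑ i, ∫ ω, X i ω ^ 2 ∂μ ≤ V) (hb : 0 ≤ b) (hV : 0 < V)
    (ht : 0 ≤ t) :
    μ.real {ω | t ≤ ∑ i, X i ω} ≤ exp (-t ^ 2 / (2 * (V + b * t / 3))) := by
  have := hindep.isProbabilityMeasure
  set A := V + b * t / 3 with hA_def
  have hA : 0 < A := by positivity
  -- with the Chernoff parameter `l = t / A`, `1 - l b / 3 = V / A` and the exponent is `-t²/(2A)`
  set l := t / A with hl_def
  have hl : 0 ≤ l := div_nonneg ht hA.le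
  have hlb : 1 - l * b / 3 = V / A := by
    rw [hl_def, hA_def]
    field_simp
    ring
  have hlb3 : l * b < 3 := by linarith [div_pos hV hA]
  have hXm : ∀ i, AEMeasurable (X i) μ := fun i => (hX i).aestronglyMeasurable.aemeasurable
  have hmgf : mgf (∑ i, X i) μ l ≤ exp (l ^ 2 / (2 * (1 - l * b / 3)) * V) := by
    have hc : 0 ≤ l ^ 2 / (2 * (1 - l * b / 3)) := by rw [hlb]; positivity
    rw [hindep.mgf_sum₀ hXm]
    calc ∏ i, mgf (X i) μ l
        ≤ ∏ i, exp (l ^ 2 / (2 * (1 - l * b / 3)) * ∫ ω, X i ω ^ 2 ∂μ) :=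
          Finset.prod_le_prod (fun i _ => mgf_nonneg)
            fun i _ => mgf_le_exp_bernstein (hX i) (hXb i) (hmean i) hb hl hlb3
      _ = exp (l ^ 2 / (2 * (1 - l * b / 3)) * ∑ i, ∫ ω, X i ω ^ 2 ∂μ) := by
          rw [← exp_sum, Finset.mul_sum]
      _ ≤ exp (l ^ 2 / (2 * (1 - l * b / 3)) * V) := by gcongr
  have hint : Integrable (fun ω => exp (l * (∑ i, X i) ω)) μ := by
    refine integrable_exp_mul_of_le l (∑ _i : ι, b) hl
      (Finset.aemeasurable_sum _ fun i _ => hXm i) ?_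
    filter_upwards [ae_all_iff.2 hXb] with ω hω
    rw [Finset.sum_apply]
    exact Finset.sum_le_sum fun i _ => hω i
  calc μ.real {ω | t ≤ ∑ i, X i ω} = μ.real {ω | t ≤ (∑ i, X i) ω} := by
        simp only [Finset.sum_apply]
    _ ≤ exp (-l * t) * mgf (∑ i, X i) μ l := measure_ge_le_exp_mul_mgf t hl hint
    _ ≤ exp (-l * t) * exp (l ^ 2 / (2 * (1 - l * b / 3)) * V) := by gcongr
    _ = exp (-t ^ 2 / (2 * (V + b * t / 3))) := by
        rw [← exp_add, hlb, hl_def, hA_def]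
        congr 1
        field_simp
        ring

theorem measure_sum_gt_le_bernstein {ι : Type*} [Fintype ι] {X : ι → Ω → ℝ} {b V : ℝ}
    (hindep : iIndepFun X μ) (hX : ∀ i, MemLp (X i) 2 μ) (hXb : ∀ i, ∀ᵐ ω ∂μ, X i ω ≤ b)
    (hmean : ∀ i, μ[X i] = 0) (hvar : ∑ i, ∫ ω, X i ω ^ 2 ∂μ ≤ V) (hb : 0 ≤ b) (s : ℝ) :
    μ {ω | √(2 * V * s) + 2 * b * s / 3 < ∑ i, X i ω} ≤ ENNReal.ofReal (exp (-s)) := by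
  have := hindep.isProbabilityMeasure
  rcases le_or_gt s 0 with hs | hs
  · exact prob_le_one.trans (ENNReal.one_le_ofReal.2 (one_le_exp (by linarith)))
  have hV : 0 ≤ V :=
    (Finset.sum_nonneg fun i _ => integral_nonneg fun ω => sq_nonneg _).trans hvar
  refine measure_gt_le_of_forall_measure_ge_le fun c hc => ?_
  -- every level `c` above the threshold is the threshold of a larger variance proxy `V'`
  set V' := (c - 2 * b * s / 3) ^ 2 / (2 * s) with hV'_def
  have hsqrt_lt : √(2 * V * s) < c - 2 * b * s / 3 := by linarith
  have hV'_s : 2 * V' * s = (c - 2 * b * s / 3) ^ 2 := by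
    rw [hV'_def]
    field_simp
  have hVV' : V ≤ V' := by
    have := pow_le_pow_left₀ (sqrt_nonneg _) hsqrt_lt.le 2
    rw [sq_sqrt (by positivity), ← hV'_s] at this
    nlinarith
  have hV' : 0 < V' := by
    have := (sqrt_nonneg (2 * V * s)).trans_lt hsqrt_lt
    positivity
  have hc0 : 0 ≤ c := by nlinarith [sqrt_nonneg (2 * V * s)]
  rw [← ofReal_measureReal]
  refine ENNReal.ofReal_le_ofReal ((measureReal_sum_ge_le_bernstein hindep hX hXb hmean
    (hvar.trans hVV') hb hV' hc0).trans (exp_le_exp.2 ?_))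
  rw [neg_div, neg_le_neg_iff, le_div_iff₀ (by positivity)]
  nlinarith [mul_nonneg (mul_nonneg hb hs.le) (hsqrt_lt.le.trans' (sqrt_nonneg _))]

theorem measure_sum_integral_sub_gt_le_bernstein {ι : Type*} [Fintype ι] {Y : ι → Ω → ℝ}
    {b V : ℝ} (hindep : iIndepFun Y μ) (hY : ∀ i, AEMeasurable (Y i) μ)
    (hYb : ∀ i, ∀ᵐ ω ∂μ, Y i ω ∈ Set.Icc 0 b) (hvar : ∑ i, ∫ ω, Y i ω ^ 2 ∂μ ≤ V) (hb : 0 ≤ b)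
    (s : ℝ) :
    μ {ω | √(2 * V * s) + 2 * b * s / 3 < ∑ i, (μ[Y i] - Y i ω)} ≤ ENNReal.ofReal (exp (-s)) := by
  have := hindep.isProbabilityMeasure
  have hYint : ∀ i, Integrable (Y i) μ := fun i => .of_mem_Icc 0 b (hY i) (hYb i)
  have hmean_le : ∀ i, μ[Y i] ≤ b := fun i => by
    simpa using integral_mono_ae (hYint i) (integrable_const b)
      (by filter_upwards [hYb i] with ω hω using hω.2)
  have hXindep : iIndepFun (fun i ω => μ[Y i] - Y i ω) μ := by
    set m : ι → ℝ := fun i => μ[Y i]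
    exact hindep.comp (fun i y => m i - y) fun _ => measurable_const.sub measurable_id
  refine measure_sum_gt_le_bernstein hXindep
    (fun i => (memLp_const _).sub (MemLp.of_bound (hY i).aestronglyMeasurable b ?_))
    (fun i => ?_) (fun i => ?_) (le_trans (Finset.sum_le_sum fun i _ => ?_) hvar) hb s
  · filter_upwards [hYb i] with ω hω
    rw [Real.norm_of_nonneg hω.1]
    exact hω.2
  · filter_upwards [hYb i] with ω hω
    linarith [hω.1, hmean_le i]
  · rw [integral_sub (integrable_const _) (hYint i)]
    simp
  · calc ∫ ω, (μ[Y i] - Y i ω) ^ 2 ∂μ = Var[Y i; μ] := by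
          rw [variance_eq_integral (hY i)]
          congr 1 with ω
          ring
      _ ≤ μ[Y i ^ 2] := variance_le_expectation_sq (hY i).aestronglyMeasurable
      _ = ∫ ω, Y i ω ^ 2 ∂μ := rfl

end ProbabilityTheory

lemma le_one_div_mul_add_of_mul_sub_le {n R S L d b s : ℝ} (hn : 0 < n) (hL : 0 ≤ L)
    (h : n * R - S ≤ √(2 * (n * L ^ 2 * d) * s) + 2 * b * s / 3) :
    R ≤ 1 / n * S + 2 * b * s / (3 * n) + L * √(2 * d * s / n) := by
  have hsqrt : √(2 * (n * L ^ 2 * d) * s) = n * (L * √(2 * d * s / n)) := by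
    rw [show 2 * (n * L ^ 2 * d) * s = (n * L) ^ 2 * (2 * d * s / n) by field_simp,
      sqrt_mul (sq_nonneg _), sqrt_sq (by positivity)]
    ring
  rw [hsqrt] at h
  calc R = n * R / n := by field_simp
    _ ≤ (S + 2 * b * s / 3 + n * (L * √(2 * d * s / n))) / n := by gcongr; linarith
    _ = 1 / n * S + 2 * b * s / (3 * n) + L * √(2 * d * s / n) := by field_simp

namespace ProbabilityTheory

variable {Ω : Type*} [MeasurableSpace Ω] {μ : Measure Ω}

theorem one_sub_exp_neg_le_measure_le_bernstein {ι : Type*} [Fintype ι] {Y : ι → Ω → ℝ}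
    {b n R L d : ℝ} (hindep : iIndepFun Y μ) (hY : ∀ i, AEMeasurable (Y i) μ)
    (hYb : ∀ i, ∀ᵐ ω ∂μ, Y i ω ∈ Set.Icc 0 b) (hb : 0 ≤ b) (hn : 0 < n) (hL : 0 ≤ L)
    (hmean : ∑ i, μ[Y i] = n * R) (hsecond : ∑ i, ∫ ω, Y i ω ^ 2 ∂μ ≤ n * L ^ 2 * d) (s : ℝ) :
    1 - ENNReal.ofReal (exp (-s))
      ≤ μ {ω | R ≤ 1 / n * ∑ i, Y i ω + 2 * b * s / (3 * n) + L * √(2 * d * s / n)} := by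
  have := hindep.isProbabilityMeasure
  refine (tsub_le_tsub_left (measure_sum_integral_sub_gt_le_bernstein hindep hY hYb hsecond hb s)
    1).trans ((one_sub_measure_le_measure_compl _).trans (measure_mono fun ω hω => ?_))
  simp only [Set.mem_compl_iff, Set.mem_ofPred_eq, not_lt, Finset.sum_sub_distrib, hmean] at hω
  exact le_one_div_mul_add_of_mul_sub_le hn hL hω

end ProbabilityTheory

lemma sum_nat_mul_div_sum_pos {ι : Type*} [Fintype ι] {w : ι → ℕ} (hw : 0 < ∑ i, w i)
    {a : ι → ℝ} (ha : ∀ i, 0 < a i) : 0 < (∑ i, (w i : ℝ) * a i) / ∑ i, (w i : ℝ) := by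
  obtain ⟨i, -, hi⟩ := Finset.exists_ne_zero_of_sum_ne_zero hw.ne'
  refine div_pos (Finset.sum_pos' (fun j _ => mul_nonneg (Nat.cast_nonneg _) (ha j).le)
    ⟨i, Finset.mem_univ _, mul_pos (by positivity) (ha i)⟩) ?_
  exact_mod_cast hw

lemma sum_integral_comp_eq_mul_integral_avg {X Y Ω : Type*} [MeasurableSpace X]
    [MeasurableSpace Y] [MeasurableSpace Ω] {ρ : Measure (X × Y)} {μΩ : Measure Ω}
    [IsProbabilityMeasure μΩ] {J : ℕ} {nvec : Fin J → ℕ} (hn : 0 < ∑ j, nvec j)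
    {Z : (j : Fin J) → Fin (nvec j) → Ω → X × Y} {Pd : X → ℝ} {hj : Fin J → X → Y → ℝ}
    {havg : X → Y → ℝ}
    (havg_def : ∀ x y, havg x y = (∑ j, (nvec j : ℝ) * hj j x y) / (∑ j, (nvec j : ℝ)))
    (hP_nonneg : ∀ x, 0 ≤ Pd x) (hP_meas : Measurable Pd) (hj_nonneg : ∀ j x y, 0 ≤ hj j x y)
    (hj_meas : ∀ j, Measurable fun z : X × Y => hj j z.1 z.2) (hZ_meas : ∀ j i, Measurable (Z j i))
    (hlaw : ∀ j i, Measure.map (Z j i) μΩ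
      = ρ.withDensity fun z => ENNReal.ofReal (hj j z.1 z.2 * Pd z.1))
    {F : X × Y → ℝ} (hF : Measurable F) {a b : ℝ} (hFab : ∀ z, F z ∈ Set.Icc a b) :
    ∑ p : (j : Fin J) × Fin (nvec j), ∫ ω, F (Z p.1 p.2 ω) ∂μΩ
      = (∑ j, (nvec j : ℝ)) * ∫ z, havg z.1 z.2 * Pd z.1 * F z ∂ρ := by
  have hn' : (0 : ℝ) < ∑ j, (nvec j : ℝ) := by exact_mod_cast hn
  rw [sum_integral_comp_eq_integral_sum_mul (Z := fun p : (j : Fin J) × Fin (nvec j) => Z p.1 p.2)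
    (g := fun p z => hj p.1 z.1 z.2 * Pd z.1) (fun p => hZ_meas p.1 p.2)
    (fun p => (hj_meas p.1).mul (hP_meas.comp measurable_fst))
    (fun p z => mul_nonneg (hj_nonneg _ _ _) (hP_nonneg _)) (fun p => hlaw p.1 p.2) hF hFab,
    ← integral_const_mul]
  congr 1 with z
  simp only [havg_def, Fintype.sum_sigma, Finset.sum_const, Finset.card_univ, Fintype.card_fin,
    nsmul_eq_mul, ← mul_assoc, ← Finset.sum_mul]
  field_simp

lemma mul_mul_div_mul_sq_le {a p h δ L : ℝ} (ha : 0 ≤ a) (hp : 0 ≤ p) (hδ : δ ∈ Set.Icc 0 L) :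
    a * p * (h / a * δ) ^ 2 ≤ L ^ 2 * (h ^ 2 / a * p) := by
  rcases ha.eq_or_lt with rfl | ha
  · simp
  calc a * p * (h / a * δ) ^ 2 = h ^ 2 / a * p * δ ^ 2 := by field_simp
    _ ≤ h ^ 2 / a * p * L ^ 2 := by gcongr; exacts [hδ.1, hδ.2]
    _ = L ^ 2 * (h ^ 2 / a * p) := mul_comm _ _

noncomputable def ipsWeightedLoss {X Y : Type*} (h havg : X → Y → ℝ) (δ : X × Y → ℝ)
    (z : X × Y) : ℝ :=
  h z.1 z.2 / havg z.1 z.2 * δ z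

section ipsWeightedLoss

variable {X Y : Type*} {h havg : X → Y → ℝ} {δ : X × Y → ℝ} {L M : ℝ}

lemma ipsWeightedLoss_mem_Icc (hh : ∀ x y, 0 ≤ h x y) (havg_nonneg : ∀ x y, 0 ≤ havg x y)
    (hδ : ∀ z, δ z ∈ Set.Icc 0 L) (hM : ∀ x y, h x y / havg x y ≤ M) (hM0 : 0 ≤ M) (z : X × Y) :
    ipsWeightedLoss h havg δ z ∈ Set.Icc 0 (L * M) :=
  ⟨mul_nonneg (div_nonneg (hh _ _) (havg_nonneg _ _)) (hδ z).1,
    (mul_le_mul (hM _ _) (hδ z).2 (hδ z).1 hM0).trans_eq (mul_comm _ _)⟩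

variable [MeasurableSpace X] [MeasurableSpace Y]

lemma measurable_ipsWeightedLoss (hh : Measurable fun z : X × Y => h z.1 z.2)
    (havg_meas : Measurable fun z : X × Y => havg z.1 z.2) (hδ : Measurable δ) :
    Measurable (ipsWeightedLoss h havg δ) :=
  (hh.div havg_meas).mul hδ

lemma integral_havg_mul_ipsWeightedLoss {ρ : Measure (X × Y)} {Pd : X → ℝ}
    (havg_ne_zero : ∀ x y, havg x y ≠ 0) :
    ∫ z, havg z.1 z.2 * Pd z.1 * ipsWeightedLoss h havg δ z ∂ρ
      = ∫ z, δ z * h z.1 z.2 * Pd z.1 ∂ρ := by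
  congr 1 with z
  have := havg_ne_zero z.1 z.2
  simp only [ipsWeightedLoss]
  field_simp

lemma integral_havg_mul_ipsWeightedLoss_sq_le {ρ : Measure (X × Y)} {Pd : X → ℝ}
    (havg_nonneg : ∀ x y, 0 ≤ havg x y) (hP_nonneg : ∀ x, 0 ≤ Pd x) (hδ : ∀ z, δ z ∈ Set.Icc 0 L)
    (hd2_int : Integrable (fun z : X × Y => h z.1 z.2 ^ 2 / havg z.1 z.2 * Pd z.1) ρ) :
    ∫ z, havg z.1 z.2 * Pd z.1 * ipsWeightedLoss h havg δ z ^ 2 ∂ρ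
      ≤ L ^ 2 * ∫ z, h z.1 z.2 ^ 2 / havg z.1 z.2 * Pd z.1 ∂ρ := by
  rw [← integral_const_mul]
  refine integral_mono_of_nonneg (ae_of_all _ fun z => ?_) (hd2_int.const_mul _)
    (ae_of_all _ fun z => ?_)
  · exact mul_nonneg (mul_nonneg (havg_nonneg _ _) (hP_nonneg _)) (sq_nonneg _)
  · exact mul_mul_div_mul_sq_le (havg_nonneg _ _) (hP_nonneg _) (hδ z)

end ipsWeightedLoss

theorem balanced_generalization_bound_general {X Y Ω : Type*} [MeasurableSpace X]
    [MeasurableSpace Y] [MeasurableSpace Ω]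
    (μ : Measure X) (ν : Measure Y)
    (μΩ : Measure Ω) [IsProbabilityMeasure μΩ]
    (J : ℕ) (nvec : Fin J → ℕ) (hn : 0 < ∑ j, nvec j)
    (Z : (j : Fin J) → Fin (nvec j) → Ω → X × Y)
    (Pd : X → ℝ) (h : X → Y → ℝ) (hj : Fin J → X → Y → ℝ) (havg : X → Y → ℝ)
    (δ : X × Y → ℝ) (L : ℝ) (Mavg : ℝ) (η : ℝ) (hη : 0 < η)
    (havg_def : ∀ x y, havg x y = (∑ j, (nvec j : ℝ) * hj j x y) / (∑ j, (nvec j : ℝ)))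
    (hP_nonneg : ∀ x, 0 ≤ Pd x) (hP_meas : Measurable Pd)
    (hh_nonneg : ∀ x y, 0 ≤ h x y)
    (hh_meas : Measurable fun z : X × Y => h z.1 z.2)
    (hj_pos : ∀ j x y, 0 < hj j x y)
    (hj_meas : ∀ j, Measurable fun z : X × Y => hj j z.1 z.2)
    (hδ : ∀ z, δ z ∈ Set.Icc (0 : ℝ) L) (hδ_meas : Measurable δ)
    (hMavg : ∀ x y, h x y / havg x y ≤ Mavg)
    (hZ_meas : ∀ j i, Measurable (Z j i))
    (hlaw : ∀ j i, Measure.map (Z j i) μΩ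
      = (μ.prod ν).withDensity fun z => ENNReal.ofReal (hj j z.1 z.2 * Pd z.1))
    (hind : iIndepFun
      (fun p : (j : Fin J) × Fin (nvec j) => Z p.1 p.2) μΩ)
    (hd2_int : Integrable
      (fun z : X × Y => (h z.1 z.2) ^ 2 / havg z.1 z.2 * Pd z.1) (μ.prod ν)) :
    μΩ {ω | ∫ z : X × Y, δ z * h z.1 z.2 * Pd z.1 ∂(μ.prod ν)
        ≤ (1 / (∑ j, (nvec j : ℝ))) * (∑ j,
            ∑ i, h (Z j i ω).1 (Z j i ω).2 / havg (Z j i ω).1 (Z j i ω).2 * δ (Z j i ω))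
          + 2 * L * Mavg * Real.log (1 / η) / (3 * ∑ j, (nvec j : ℝ))
          + L * Real.sqrt (2 *
              (∫ z : X × Y, (h z.1 z.2) ^ 2 / havg z.1 z.2 * Pd z.1 ∂(μ.prod ν))
              * Real.log (1 / η) / (∑ j, (nvec j : ℝ)))}
      ≥ ENNReal.ofReal (1 - η) := by
  have hn' : (0 : ℝ) < ∑ j, (nvec j : ℝ) := by exact_mod_cast hn
  have havg_pos : ∀ x y, 0 < havg x y := fun x y =>
    havg_def x y ▸ sum_nat_mul_div_sum_pos hn fun j => hj_pos j x y
  obtain ⟨hL, hM⟩ : 0 ≤ L ∧ 0 ≤ Mavg := by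
    obtain ⟨j, -, hj0⟩ := Finset.exists_ne_zero_of_sum_ne_zero hn.ne'
    obtain ⟨ω₀⟩ := nonempty_of_isProbabilityMeasure μΩ
    set z₀ := Z j ⟨0, Nat.pos_of_ne_zero hj0⟩ ω₀
    exact ⟨(hδ z₀).1.trans (hδ z₀).2,
      (div_nonneg (hh_nonneg _ _) (havg_pos _ _).le).trans (hMavg z₀.1 z₀.2)⟩
  set W := ipsWeightedLoss h havg δ
  have hW := ipsWeightedLoss_mem_Icc hh_nonneg (fun x y => (havg_pos x y).le) hδ hMavg hM
  have hW_meas : Measurable W := by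
    refine measurable_ipsWeightedLoss hh_meas ?_ hδ_meas
    simp only [havg_def]
    exact (Finset.measurable_sum _ fun j _ => (hj_meas j).const_mul _).div_const _
  have hmix {F : X × Y → ℝ} (hF : Measurable F) {a b : ℝ} (hFab : ∀ z, F z ∈ Set.Icc a b) :=
    sum_integral_comp_eq_mul_integral_avg (ρ := μ.prod ν) hn havg_def hP_nonneg hP_meas
      (fun j x y => (hj_pos j x y).le) hj_meas hZ_meas hlaw hF hFab
  have hmean : ∑ p : (j : Fin J) × Fin (nvec j), ∫ ω, W (Z p.1 p.2 ω) ∂μΩ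
      = (∑ j, (nvec j : ℝ)) * ∫ z, δ z * h z.1 z.2 * Pd z.1 ∂(μ.prod ν) := by
    rw [hmix hW_meas hW, integral_havg_mul_ipsWeightedLoss fun x y => (havg_pos x y).ne']
  have hsecond : ∑ p : (j : Fin J) × Fin (nvec j), ∫ ω, W (Z p.1 p.2 ω) ^ 2 ∂μΩ
      ≤ (∑ j, (nvec j : ℝ)) * L ^ 2 * ∫ z, h z.1 z.2 ^ 2 / havg z.1 z.2 * Pd z.1 ∂(μ.prod ν) := by
    rw [hmix (hW_meas.pow_const 2) fun z => ⟨sq_nonneg _, pow_le_pow_left₀ (hW z).1 (hW z).2 2⟩,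
      mul_assoc]
    exact mul_le_mul_of_nonneg_left (integral_havg_mul_ipsWeightedLoss_sq_le
      (fun x y => (havg_pos x y).le) hP_nonneg hδ hd2_int) hn'.le
  have hbound := one_sub_exp_neg_le_measure_le_bernstein
    (Y := fun (p : (j : Fin J) × Fin (nvec j)) ω => W (Z p.1 p.2 ω))
    (hind.comp (fun _ => W) fun _ => hW_meas)
    (fun p => (hW_meas.comp (hZ_meas p.1 p.2)).aemeasurable) (fun p => ae_of_all _ fun ω => hW _)
    (mul_nonneg hL hM) hn' hL hmean hsecond (log (1 / η))
  rw [show exp (-log (1 / η)) = η by rw [one_div, log_inv, neg_neg, exp_log hη]] at hbound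
  rw [ge_iff_le, ENNReal.ofReal_sub _ hη.le, ENNReal.ofReal_one]
  refine hbound.trans (measure_mono fun ω hω => ?_)
  simpa only [Fintype.sum_sigma, mul_assoc, W, ipsWeightedLoss] using hω

/-- Generalization error bound for the balanced IPS estimator (Theorem 3): with
probability at least `1 - η`,
`R(h) ≤ R̂_bal(h) + 2 L M_avg log(1/η) / (3n) + L √(2 d₂(h‖h_avg; P) log(1/η) / n)`,
where `h_avg = (Σ_j n_j h_j)/n` and `M_avg` bounds `d_∞(h‖h_avg)`. -/
theorem balanced_generalization_bound {X Y Ω : Type*} [MeasurableSpace X]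
    [MeasurableSpace Y] [MeasurableSpace Ω]
    (μ : Measure X) (ν : Measure Y) [SigmaFinite μ] [SigmaFinite ν]
    (μΩ : Measure Ω) [IsProbabilityMeasure μΩ]
    (J : ℕ) (nvec : Fin J → ℕ) (hn : 0 < ∑ j, nvec j)
    (Z : (j : Fin J) → Fin (nvec j) → Ω → X × Y)
    (Pd : X → ℝ) (h : X → Y → ℝ) (hj : Fin J → X → Y → ℝ) (havg : X → Y → ℝ)
    (δ : X × Y → ℝ) (L : ℝ) (Mavg : ℝ) (η : ℝ) (hη : 0 < η)
    (havg_def : ∀ x y, havg x y = (∑ j, (nvec j : ℝ) * hj j x y) / (∑ j, (nvec j : ℝ)))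
    (hP_nonneg : ∀ x, 0 ≤ Pd x) (hP_density : ∫ x, Pd x ∂μ = 1) (hP_meas : Measurable Pd)
    (hh_nonneg : ∀ x y, 0 ≤ h x y) (hh_density : ∀ x, ∫ y, h x y ∂ν = 1)
    (hh_meas : Measurable fun z : X × Y => h z.1 z.2)
    (hj_pos : ∀ j x y, 0 < hj j x y) (hj_density : ∀ j x, ∫ y, hj j x y ∂ν = 1)
    (hj_meas : ∀ j, Measurable fun z : X × Y => hj j z.1 z.2)
    (hδ : ∀ z, δ z ∈ Set.Icc (0 : ℝ) L) (hδ_meas : Measurable δ)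
    (hMavg : ∀ x y, h x y / havg x y ≤ Mavg)
    (hZ_meas : ∀ j i, Measurable (Z j i))
    (hlaw : ∀ j i, Measure.map (Z j i) μΩ
      = (μ.prod ν).withDensity fun z => ENNReal.ofReal (hj j z.1 z.2 * Pd z.1))
    (hind : iIndepFun
      (fun p : (j : Fin J) × Fin (nvec j) => Z p.1 p.2) μΩ)
    (hd2_int : Integrable
      (fun z : X × Y => (h z.1 z.2) ^ 2 / havg z.1 z.2 * Pd z.1) (μ.prod ν))
    (hR_int : Integrable (fun z : X × Y => δ z * h z.1 z.2 * Pd z.1) (μ.prod ν)) :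
    μΩ {ω | ∫ z : X × Y, δ z * h z.1 z.2 * Pd z.1 ∂(μ.prod ν)
        ≤ (1 / (∑ j, (nvec j : ℝ))) * (∑ j,
            ∑ i, h (Z j i ω).1 (Z j i ω).2 / havg (Z j i ω).1 (Z j i ω).2 * δ (Z j i ω))
          + 2 * L * Mavg * Real.log (1 / η) / (3 * ∑ j, (nvec j : ℝ))
          + L * Real.sqrt (2 *
              (∫ z : X × Y, (h z.1 z.2) ^ 2 / havg z.1 z.2 * Pd z.1 ∂(μ.prod ν))
              * Real.log (1 / η) / (∑ j, (nvec j : ℝ)))}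
      ≥ ENNReal.ofReal (1 - η) :=
  balanced_generalization_bound_general μ ν μΩ J nvec hn Z Pd h hj havg δ L Mavg η hη havg_def
    hP_nonneg hP_meas hh_nonneg hh_meas hj_pos hj_meas hδ hδ_meas hMavg hZ_meas hlaw hind hd2_int
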